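/- Consider the residual-sketch iteration: given A ∈ ℝ^{m×n}, b ∈ ℝ^m, x₀ ∈ ℝ^n, set r₀ = b − A x₀ and for j ≥ 1 let S_j = [r₀ r₁ … r_{j−1}] ∈ ℝ^{m×j}, p_j = Aᵀ S_j (S_jᵀ A Aᵀ S_j)⁻¹ S_jᵀ r_{j−1}, x_j = x_{j−1} + p_j, r_j = b − A x_j. Assume the Gram matrices S_jᵀ A Aᵀ S_j are invertible for j = 1,…,k, where k ≥ 2. Set y_k = Aᵀ r_{k−1}, ρ = ‖r_{k−1}‖₂², θ = ‖p_{k−1}‖₂², φ = ‖y_k‖₂². Then θ φ − ρ² > 0 and p_k satisfies the one-step recursion p_k = β p_{k−1} + γ y_k with β = ρ² / (θ φ − ρ²) and γ = θ ρ / (θ φ − ρ²). -/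

import Mathlib

/-!
Write `a_i = Aᵀ r_i` and `K_j = span {a_0, …, a_{j-1}}` (the range of `Aᵀ S_j`). The step `p_j` is
the unique vector of `K_j` with `a_i ⬝ p_j = r_i ⬝ r_{j-1}` for `i < j`. Since
`r_j = r_{j-1} - A p_j`, this makes the residuals mutually orthogonal and `p_{j+1} ⊥ K_j`, so
`p_{j+1} ∉ K_j` and by the exchange lemma `K_j = span {p_1, …, p_j}`. Hence `y = a_{k-1}` is
orthogonal to `p_1, …, p_{k-2}` while `y ⬝ p_{k-1} = -ρ`, and `β p_{k-1} + γ y` satisfies the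
characterisation of `p_k` as soon as `βθ = γρ` and `γφ - βρ = ρ`. Finally `y ∉ K_{k-1}`, so
`θφ - ρ² > 0` is the strict Cauchy–Schwarz inequality for `y` and `p_{k-1}`.
-/

open Matrix

def colCat {m : ℕ} (r : ℕ → Fin m → ℝ) (k : ℕ) : Matrix (Fin m) (Fin k) ℝ :=
  Matrix.of fun i l => r l.val i

open Submodule

section DotProduct

variable {ι R : Type*} [Fintype ι] [CommRing R]

lemma dotProduct_eq_zero_of_mem_span {S : Set (ι → R)} {v w : ι → R}
    (hS : ∀ s ∈ S, s ⬝ᵥ w = 0) (hv : v ∈ span R S) : v ⬝ᵥ w = 0 := by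
  induction hv using Submodule.span_induction with
  | mem s hs => exact hS s hs
  | zero => exact zero_dotProduct w
  | add x y _ _ hx hy => rw [add_dotProduct, hx, hy, add_zero]
  | smul a x _ hx => rw [smul_dotProduct, hx, smul_zero]

variable [LinearOrder R] [IsStrictOrderedRing R]

lemma dotProduct_self_pos {v : ι → R} (hv : v ≠ 0) : 0 < v ⬝ᵥ v :=
  (Finset.sum_nonneg fun i _ => mul_self_nonneg (v i)).lt_of_ne' (dotProduct_self_eq_zero.not.2 hv)

lemma eq_of_mem_span_of_dotProduct_eq {S : Set (ι → R)} {v w : ι → R}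
    (hv : v ∈ span R S) (hw : w ∈ span R S) (h : ∀ s ∈ S, s ⬝ᵥ v = s ⬝ᵥ w) : v = w := by
  have hperp : ∀ s ∈ S, s ⬝ᵥ (v - w) = 0 := fun s hs => by rw [dotProduct_sub, h s hs, sub_self]
  exact sub_eq_zero.1 <| dotProduct_self_eq_zero.1 <|
    dotProduct_eq_zero_of_mem_span hperp (sub_mem hv hw)

lemma sq_dotProduct_lt_of_notMem_span {K : Type*} [Field K] [LinearOrder K]
    [IsStrictOrderedRing K] {u w : ι → K} (hw : w ≠ 0) (hu : u ∉ span K {w}) :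
    (u ⬝ᵥ w) ^ 2 < (u ⬝ᵥ u) * (w ⬝ᵥ w) := by
  set v := (w ⬝ᵥ w) • u - (u ⬝ᵥ w) • w
  have hww := dotProduct_self_pos hw
  have hv : v ≠ 0 := fun hv => hu <| by
    have hu' : u = (w ⬝ᵥ w)⁻¹ • ((u ⬝ᵥ w) • w) := by
      rw [← sub_eq_zero.1 hv, smul_smul, inv_mul_cancel₀ hww.ne', one_smul]
    rw [hu', ← smul_assoc]
    exact smul_mem _ _ (mem_span_singleton_self w)
  have hvv : v ⬝ᵥ v = (w ⬝ᵥ w) * ((u ⬝ᵥ u) * (w ⬝ᵥ w) - (u ⬝ᵥ w) ^ 2) := by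
    simp only [v, sub_dotProduct, dotProduct_sub, smul_dotProduct, dotProduct_smul, smul_eq_mul,
      dotProduct_comm w u]
    ring
  have := dotProduct_self_pos hv
  rw [hvv] at this
  exact sub_pos.1 (pos_of_mul_pos_right this hww.le)

end DotProduct

section Sketch

variable {m n s R : Type*} [Fintype m] [Fintype n] [Fintype s] [DecidableEq s] [CommRing R]

lemma transpose_mulVec_mulVec_gram_inv (A : Matrix m n R) (S : Matrix m s R)
    (hG : IsUnit (Sᵀ * A * Aᵀ * S)) (c : s → R) :
    Sᵀ *ᵥ (A *ᵥ ((Aᵀ * S) *ᵥ ((Sᵀ * A * Aᵀ * S)⁻¹ *ᵥ c))) = c := by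
  simp only [mulVec_mulVec, ← Matrix.mul_assoc]
  rw [mul_nonsing_inv _ ((isUnit_iff_isUnit_det _).1 hG), one_mulVec]

lemma dotProduct_transpose_mulVec_left (A : Matrix m n R) (u : m → R) (w : n → R) :
    (Aᵀ *ᵥ u) ⬝ᵥ w = u ⬝ᵥ A *ᵥ w := by
  rw [dotProduct_comm, dotProduct_transpose_mulVec]

end Sketch

section ColCat

variable {m : ℕ} (r : ℕ → Fin m → ℝ)

lemma colCat_transpose_mulVec_apply {j : ℕ} (v : Fin m → ℝ) (i : Fin j) :
    ((colCat r j)ᵀ *ᵥ v) i = r i ⬝ᵥ v := by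
  simp [colCat, mulVec, dotProduct]

lemma colCat_mulVec {j : ℕ} (z : Fin j → ℝ) : colCat r j *ᵥ z = ∑ l, z l • r l := by
  ext i
  simp [colCat, mulVec, dotProduct, mul_comm]

lemma colCat_mulVec_single {j : ℕ} (i : Fin j) : colCat r j *ᵥ Pi.single i 1 = r i := by
  rw [colCat_mulVec]
  simp [Pi.single_apply]

end ColCat

-- The range of `Aᵀ S_j`, where `S_j = colCat r j`.
def sketchSpace {m n : ℕ} (A : Matrix (Fin m) (Fin n) ℝ) (r : ℕ → Fin m → ℝ) (j : ℕ) :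
    Submodule ℝ (Fin n → ℝ) :=
  span ℝ ((fun i => Aᵀ *ᵥ r i) '' Set.Iio j)

section SketchSpace

variable {m n : ℕ} {A : Matrix (Fin m) (Fin n) ℝ} {r : ℕ → Fin m → ℝ}

lemma mulVec_residual_mem_sketchSpace {i j : ℕ} (hij : i < j) : Aᵀ *ᵥ r i ∈ sketchSpace A r j :=
  subset_span ⟨i, hij, rfl⟩

lemma sketchSpace_mono : Monotone (sketchSpace A r) :=
  fun _ _ hij => span_mono (Set.image_mono (Set.Iio_subset_Iio hij))

lemma sketchSpace_add_one (j : ℕ) :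
    sketchSpace A r (j + 1) = span ℝ (insert (Aᵀ *ᵥ r j) ((fun i => Aᵀ *ᵥ r i) '' Set.Iio j)) := by
  rw [sketchSpace, Set.Iio_add_one_eq_Iic, ← Set.Iio_insert, Set.image_insert_eq]

lemma mulVec_colCat_mem_sketchSpace {j : ℕ} (z : Fin j → ℝ) :
    (Aᵀ * colCat r j) *ᵥ z ∈ sketchSpace A r j := by
  rw [← mulVec_mulVec, colCat_mulVec, mulVec_sum]
  exact sum_mem fun l _ => by
    rw [mulVec_smul]
    exact smul_mem _ _ (mulVec_residual_mem_sketchSpace l.isLt)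

end SketchSpace

-- `p_{j+1}` lies in the range of `Aᵀ S_{j+1}` and solves `S_{j+1}ᵀ A p = S_{j+1}ᵀ r_j`.
structure IsResidualSketchRun {m n : ℕ} (A : Matrix (Fin m) (Fin n) ℝ) (r : ℕ → Fin m → ℝ)
    (p : ℕ → Fin n → ℝ) (k : ℕ) : Prop where
  residual_add_one : ∀ j < k, r (j + 1) = r j - A *ᵥ p (j + 1)
  mem_sketchSpace : ∀ j < k, p (j + 1) ∈ sketchSpace A r (j + 1)
  sketch_eq : ∀ j < k, ∀ i ≤ j, (Aᵀ *ᵥ r i) ⬝ᵥ p (j + 1) = r i ⬝ᵥ r j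
  residual_ne_zero : ∀ i < k, r i ≠ 0

namespace IsResidualSketchRun

variable {m n k : ℕ} {A : Matrix (Fin m) (Fin n) ℝ} {r : ℕ → Fin m → ℝ} {p : ℕ → Fin n → ℝ}
  (h : IsResidualSketchRun A r p k)
include h

lemma dotProduct_p_add_one {j : ℕ} (hj : j < k) (u : Fin m → ℝ) :
    (Aᵀ *ᵥ u) ⬝ᵥ p (j + 1) = u ⬝ᵥ r j - u ⬝ᵥ r (j + 1) := by
  rw [dotProduct_transpose_mulVec_left, h.residual_add_one j hj, dotProduct_sub]
  ring

lemma residual_orthogonal {i j : ℕ} (hij : i < j) (hjk : j ≤ k) : r i ⬝ᵥ r j = 0 := by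
  obtain ⟨j, rfl⟩ : ∃ j', j = j' + 1 := ⟨j - 1, by omega⟩
  have := h.dotProduct_p_add_one hjk (r i)
  rw [h.sketch_eq j hjk i (by omega)] at this
  linarith

lemma dotProduct_p_add_one_eq_zero {j : ℕ} (hj : j < k) {v : Fin n → ℝ}
    (hv : v ∈ sketchSpace A r j) : v ⬝ᵥ p (j + 1) = 0 := by
  refine dotProduct_eq_zero_of_mem_span ?_ hv
  rintro _ ⟨i, hi, rfl⟩
  rw [h.sketch_eq j hj i (le_of_lt hi), h.residual_orthogonal hi hj.le]

lemma dotProduct_p_add_one_pos {j : ℕ} (hj : j < k) : 0 < (Aᵀ *ᵥ r j) ⬝ᵥ p (j + 1) := by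
  rw [h.sketch_eq j hj j le_rfl]
  exact dotProduct_self_pos (h.residual_ne_zero j hj)

lemma p_add_one_ne_zero {j : ℕ} (hj : j < k) : p (j + 1) ≠ 0 := fun h0 => by
  simpa [h0] using h.dotProduct_p_add_one_pos hj

lemma mulVec_residual_notMem_sketchSpace {j : ℕ} (hj : j < k) :
    Aᵀ *ᵥ r j ∉ sketchSpace A r j := fun hmem =>
  (h.dotProduct_p_add_one_pos hj).ne' (h.dotProduct_p_add_one_eq_zero hj hmem)

lemma p_add_one_notMem_sketchSpace {j : ℕ} (hj : j < k) : p (j + 1) ∉ sketchSpace A r j :=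
  fun hmem => h.p_add_one_ne_zero hj <|
    dotProduct_self_eq_zero.1 (h.dotProduct_p_add_one_eq_zero hj hmem)

lemma sketchSpace_le_span_p {j : ℕ} (hj : j ≤ k) :
    sketchSpace A r j ≤ span ℝ (p '' Set.Icc 1 j) := by
  induction j with
  | zero => simp [sketchSpace]
  | succ j ih =>
    have hprev : sketchSpace A r j ≤ span ℝ (p '' Set.Icc 1 (j + 1)) :=
      (ih (by omega)).trans (span_mono (Set.image_mono (Set.Icc_subset_Icc_right (by omega))))
    -- `p_{j+1}` is a new direction of `sketchSpace A r (j + 1)`, so it can be exchanged for `Aᵀ r_j`.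
    have hexch : Aᵀ *ᵥ r j ∈ span ℝ (insert (p (j + 1)) ((fun i => Aᵀ *ᵥ r i) '' Set.Iio j)) :=
      mem_span_insert_exchange (sketchSpace_add_one (A := A) j ▸ h.mem_sketchSpace j hj)
        (h.p_add_one_notMem_sketchSpace hj)
    rw [sketchSpace_add_one, span_le, Set.insert_subset_iff]
    refine ⟨span_le.2 ?_ hexch, subset_span.trans hprev⟩
    rw [Set.insert_subset_iff]
    exact ⟨subset_span ⟨j + 1, ⟨by omega, le_rfl⟩, rfl⟩, subset_span.trans hprev⟩

lemma eq_p_add_one {j : ℕ} (hj : j < k) {v : Fin n → ℝ} (hv : v ∈ sketchSpace A r (j + 1))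
    (hperp : ∀ w ∈ sketchSpace A r j, w ⬝ᵥ v = 0) (hlast : (Aᵀ *ᵥ r j) ⬝ᵥ v = r j ⬝ᵥ r j) :
    v = p (j + 1) := by
  refine eq_of_mem_span_of_dotProduct_eq hv (h.mem_sketchSpace j hj) ?_
  rintro _ ⟨i, hi, rfl⟩
  rcases Nat.lt_succ_iff_lt_or_eq.1 hi with hi | rfl
  · rw [hperp _ (mulVec_residual_mem_sketchSpace hi),
      h.dotProduct_p_add_one_eq_zero hj (mulVec_residual_mem_sketchSpace hi)]
  · rw [hlast, h.sketch_eq i hj i le_rfl]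

lemma mulVec_residual_dotProduct_p {j : ℕ} (hj : j + 1 < k) :
    (Aᵀ *ᵥ r (j + 1)) ⬝ᵥ p (j + 1) = -(r (j + 1) ⬝ᵥ r (j + 1)) := by
  rw [h.dotProduct_p_add_one (by omega), dotProduct_comm,
    h.residual_orthogonal (Nat.lt_succ_self j) hj.le, zero_sub]

lemma sq_dotProduct_self_residual_lt {j : ℕ} (hj : j + 1 < k) :
    (r (j + 1) ⬝ᵥ r (j + 1)) ^ 2 <
      (p (j + 1) ⬝ᵥ p (j + 1)) * ((Aᵀ *ᵥ r (j + 1)) ⬝ᵥ (Aᵀ *ᵥ r (j + 1))) := by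
  have hspan : span ℝ {p (j + 1)} ≤ sketchSpace A r (j + 1) :=
    span_le.2 (Set.singleton_subset_iff.2 (h.mem_sketchSpace j (by omega)))
  have := sq_dotProduct_lt_of_notMem_span (h.p_add_one_ne_zero (by omega))
    fun hmem => h.mulVec_residual_notMem_sketchSpace hj (hspan hmem)
  rwa [h.mulVec_residual_dotProduct_p hj, neg_sq, mul_comm] at this

lemma p_add_two_eq {j : ℕ} (hj : j + 1 < k) {β γ : ℝ}
    (hβ : β * (p (j + 1) ⬝ᵥ p (j + 1)) = γ * (r (j + 1) ⬝ᵥ r (j + 1)))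
    (hγ : γ * ((Aᵀ *ᵥ r (j + 1)) ⬝ᵥ (Aᵀ *ᵥ r (j + 1))) - β * (r (j + 1) ⬝ᵥ r (j + 1)) =
      r (j + 1) ⬝ᵥ r (j + 1)) :
    p (j + 2) = β • p (j + 1) + γ • (Aᵀ *ᵥ r (j + 1)) := by
  set y := Aᵀ *ᵥ r (j + 1)
  have hyp := h.mulVec_residual_dotProduct_p hj
  have hperp : ∀ i ∈ Set.Icc 1 j, p i ⬝ᵥ p (j + 1) = 0 ∧ p i ⬝ᵥ y = 0 := by
    rintro i ⟨hi, hij⟩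
    obtain ⟨i, rfl⟩ : ∃ i', i = i' + 1 := ⟨i - 1, by omega⟩
    refine ⟨h.dotProduct_p_add_one_eq_zero (by omega)
      (sketchSpace_mono hij (h.mem_sketchSpace i (by omega))), ?_⟩
    rw [dotProduct_comm, h.dotProduct_p_add_one (by omega), dotProduct_comm,
      h.residual_orthogonal (by omega) hj.le, dotProduct_comm,
      h.residual_orthogonal (by omega) hj.le, sub_zero]
  refine (h.eq_p_add_one hj ?_ ?_ ?_).symm
  · exact add_mem (smul_mem _ _ (sketchSpace_mono (by omega) (h.mem_sketchSpace j (by omega))))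
      (smul_mem _ _ (mulVec_residual_mem_sketchSpace (by omega)))
  · intro w hw
    refine dotProduct_eq_zero_of_mem_span ?_ (h.sketchSpace_le_span_p (by omega) hw)
    rintro _ ⟨i, hi, rfl⟩
    simp only [dotProduct_add, dotProduct_smul, smul_eq_mul]
    rcases hi.2.lt_or_eq with hij | rfl
    · rw [(hperp i ⟨hi.1, by omega⟩).1, (hperp i ⟨hi.1, by omega⟩).2]
      ring
    · rw [dotProduct_comm _ y, hyp]
      linear_combination hβ
  · simp only [dotProduct_add, dotProduct_smul, smul_eq_mul, hyp]
    linear_combination hγ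

end IsResidualSketchRun

lemma IsResidualSketchRun.of_iteration {m n k : ℕ} {A : Matrix (Fin m) (Fin n) ℝ}
    {b : Fin m → ℝ} {x p : ℕ → Fin n → ℝ} {r : ℕ → Fin m → ℝ}
    (hr : ∀ j, r j = b - A *ᵥ x j)
    (hinv : ∀ j, 1 ≤ j → j ≤ k → IsUnit ((colCat r j)ᵀ * A * Aᵀ * colCat r j))
    (hp : ∀ j, 1 ≤ j → j ≤ k →
      p j = (Aᵀ * colCat r j) *ᵥ
        (((colCat r j)ᵀ * A * Aᵀ * colCat r j)⁻¹ *ᵥ ((colCat r j)ᵀ *ᵥ r (j - 1))))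
    (hx : ∀ j, 1 ≤ j → j ≤ k → x j = x (j - 1) + p j) :
    IsResidualSketchRun A r p k where
  residual_add_one j hj := by
    rw [hr, hr, hx (j + 1) (by omega) hj, Nat.add_sub_cancel, mulVec_add, sub_add_eq_sub_sub]
  mem_sketchSpace j hj := by
    rw [hp (j + 1) (by omega) hj]
    exact mulVec_colCat_mem_sketchSpace _
  sketch_eq j hj i hi := by
    have hsketch := transpose_mulVec_mulVec_gram_inv A _ (hinv (j + 1) (by omega) hj)
      ((colCat r (j + 1))ᵀ *ᵥ r j)
    have hpj := hp (j + 1) (by omega) hj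
    rw [Nat.add_sub_cancel] at hpj
    rw [← hpj] at hsketch
    have := congrFun hsketch ⟨i, by omega⟩
    rwa [colCat_transpose_mulVec_apply, colCat_transpose_mulVec_apply,
      ← dotProduct_transpose_mulVec_left] at this
  residual_ne_zero i hi h0 := by
    have hgram : ((colCat r k)ᵀ * A * Aᵀ * colCat r k) *ᵥ Pi.single ⟨i, hi⟩ 1 = 0 := by
      simp only [← mulVec_mulVec, colCat_mulVec_single, h0, mulVec_zero]
    have := mulVec_injective_iff_isUnit.2 (hinv k (by omega) le_rfl)
      (hgram.trans (mulVec_zero _).symm)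
    simp at this

/-- One-step recursion of the residual-sketch (PLSS) iteration: with
`y_k = Aᵀ r_{k−1}`, `ρ = ‖r_{k−1}‖²`, `θ = ‖p_{k−1}‖²`, `φ = ‖y_k‖²`, one has
`θφ − ρ² > 0` and `p_k = β p_{k−1} + γ y_k` with `β = ρ²/(θφ − ρ²)` and
`γ = θρ/(θφ − ρ²)`. -/
theorem stmt11 (m n k : ℕ) (hk : 2 ≤ k)
    (A : Matrix (Fin m) (Fin n) ℝ) (b : Fin m → ℝ)
    (x p : ℕ → Fin n → ℝ) (r : ℕ → Fin m → ℝ)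
    (hr : ∀ j, r j = b - A.mulVec (x j))
    (hinv : ∀ j, 1 ≤ j → j ≤ k → IsUnit ((colCat r j)ᵀ * A * Aᵀ * colCat r j))
    (hp : ∀ j, 1 ≤ j → j ≤ k →
      p j = (Aᵀ * colCat r j).mulVec
        (((colCat r j)ᵀ * A * Aᵀ * colCat r j)⁻¹.mulVec
          ((colCat r j)ᵀ.mulVec (r (j - 1)))))
    (hx : ∀ j, 1 ≤ j → j ≤ k → x j = x (j - 1) + p j)
    (y : Fin n → ℝ) (hy : y = Aᵀ.mulVec (r (k - 1)))
    (ρ θ φ : ℝ)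
    (hρ : ρ = r (k - 1) ⬝ᵥ r (k - 1))
    (hθ : θ = p (k - 1) ⬝ᵥ p (k - 1))
    (hφ : φ = y ⬝ᵥ y) :
    0 < θ * φ - ρ ^ 2 ∧
      p k = (ρ ^ 2 / (θ * φ - ρ ^ 2)) • p (k - 1) + (θ * ρ / (θ * φ - ρ ^ 2)) • y := by
  have run := IsResidualSketchRun.of_iteration hr hinv hp hx
  obtain ⟨j, rfl⟩ : ∃ j, k = j + 2 := ⟨k - 2, by omega⟩
  rw [show j + 2 - 1 = j + 1 from rfl] at hy hρ hθ
  have hD : 0 < θ * φ - ρ ^ 2 := by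
    have := run.sq_dotProduct_self_residual_lt (j := j) (by omega)
    rwa [← hρ, ← hθ, ← hy, ← hφ, ← sub_pos] at this
  refine ⟨hD, hy ▸ run.p_add_two_eq (by omega) ?_ ?_⟩
  all_goals simp only [← hy, ← hρ, ← hθ, ← hφ]; field_simp
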